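/- For two median graphs (X,G) and (Y,H), a function f : X → Y is a median homomorphism (preserves the ternary median operation) if and only if the preimage under f of every half-space of Y is a half-space of X. -/

import Mathlib

open SimpleGraph

variable {X : Type*}

/-- The geodesic interval between `x` and `y`. -/
def interval (G : SimpleGraph X) (x y : X) : Set X :=
  {z | G.dist x z + G.dist z y = G.dist x y}

/-- A set is convex if it contains all geodesics between its points. -/
def IsConvexSet (G : SimpleGraph X) (A : Set X) : Prop :=
  ∀ x ∈ A, ∀ y ∈ A, interval G x y ⊆ A

/-- A median graph: connected, and every triple has a unique median. -/
def IsMedianGraph (G : SimpleGraph X) : Prop :=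
  G.Connected ∧ ∀ x y z : X, ∃! m : X,
    m ∈ interval G x y ∧ m ∈ interval G y z ∧ m ∈ interval G z x

/-- The cone at `y` away from `x`. -/
def cone (G : SimpleGraph X) (x y : X) : Set X :=
  {z | y ∈ interval G x z}

/-- A half-space: a convex set with convex complement. -/
def IsHalfspace (G : SimpleGraph X) (H : Set X) : Prop :=
  IsConvexSet G H ∧ IsConvexSet G Hᶜ

/-- Convex hull. -/
def convexHullG (G : SimpleGraph X) (A : Set X) : Set X :=
  ⋂₀ {B : Set X | IsConvexSet G B ∧ A ⊆ B}

/-- Inward edge boundary of a set. -/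
def edgeBoundaryIn (G : SimpleGraph X) (H : Set X) : Set (X × X) :=
  {e | G.Adj e.1 e.2 ∧ e.1 ∉ H ∧ e.2 ∈ H}

/-- Two sets are nested if one of the four corners is empty. -/
def Nested (A B : Set X) : Prop :=
  A ∩ B = ∅ ∨ A ∩ Bᶜ = ∅ ∨ Aᶜ ∩ B = ∅ ∨ Aᶜ ∩ Bᶜ = ∅

open Classical in
noncomputable def medianOf (G : SimpleGraph X) (x y z : X) : X :=
  if h : ∃! m : X, m ∈ interval G x y ∧ m ∈ interval G y z ∧ m ∈ interval G z x
  then h.choose else x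

open Classical in
noncomputable def projOn (G : SimpleGraph X) (A : Set X) (x : X) : X :=
  if h : ∃ p, p ∈ A ∧ ∀ a ∈ A, p ∈ interval G x a then h.choose else x


/-- Edges crossing out of a set. -/
def crossEdges (G : SimpleGraph X) (A : Set X) : Set (X × X) :=
  {e | G.Adj e.1 e.2 ∧ e.1 ∈ A ∧ e.2 ∉ A}

/-- Total vertex boundary of a set. -/
def vBoundary (G : SimpleGraph X) (A : Set X) : Set X :=
  {x | ∃ y, G.Adj x y ∧ ((x ∈ A ∧ y ∉ A) ∨ (x ∉ A ∧ y ∈ A))}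

/-- Two sets are non-nested if all four corners are nonempty. -/
def NonNested (A B : Set X) : Prop :=
  (A ∩ B).Nonempty ∧ (A ∩ Bᶜ).Nonempty ∧ (Aᶜ ∩ B).Nonempty ∧ (Aᶜ ∩ Bᶜ).Nonempty

/-- `H` is a successor of `K`: both are half-spaces, `K ⊊ H`, with no half-space
strictly in between. -/
def Successor (G : SimpleGraph X) (H K : Set X) : Prop :=
  IsHalfspace G H ∧ IsHalfspace G K ∧ K ⊂ H ∧
    ¬ ∃ L : Set X, IsHalfspace G L ∧ K ⊂ L ∧ L ⊂ H

/-- Adjacency of the hyperplanes of half-spaces `H`, `K`. -/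
def HypAdj (G : SimpleGraph X) (H K : Set X) : Prop :=
  H = K ∨ H = Kᶜ ∨ NonNested H K ∨
  Successor G H K ∨ Successor G K H ∨
  Successor G Hᶜ K ∨ Successor G K Hᶜ ∨
  Successor G H Kᶜ ∨ Successor G Kᶜ H ∨
  Successor G Hᶜ Kᶜ ∨ Successor G Kᶜ Hᶜ

/-- The Hamming cube on `{0,1}^n`: strings adjacent iff they differ in exactly one bit. -/
def hammingCube (n : ℕ) : SimpleGraph (Fin n → Bool) :=
  SimpleGraph.fromRel (fun a b => ∃! i : Fin n, a i ≠ b i)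

/-- Oriented edges `e`, `f` are parallel sides of a square (4-cycle). -/
def SquareParallel (G : SimpleGraph X) (e f : X × X) : Prop :=
  G.Adj e.1 e.2 ∧ G.Adj f.1 f.2 ∧ G.Adj e.1 f.1 ∧ G.Adj e.2 f.2 ∧ e.1 ≠ f.2 ∧ e.2 ≠ f.1

/-!
A median homomorphism maps intervals into intervals, because `z ∈ [x, y]` exactly when `z` is the
median of `x, z, y`; hence preimages of convex sets, in particular of half-spaces, are convex.
Conversely, a map preserving intervals preserves medians, the median being the unique vertex in
the three intervals, so it suffices that pulling back half-spaces forces `f` to preserve intervals.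
This follows from separation: if `w ∉ [a, b]`, let `m` be the median of `a, b, w` and `c` the
neighbour of `m` towards `w`; the Djoković–Winkler set `W_mc` of vertices closer to `m` than to `c`
is a half-space containing `a` and `b` but not `w`. Its convexity is the heart of the proof: a
geodesic cannot leave `W_uv` through an edge and come back.
-/

open Set

section Interval

variable {G : SimpleGraph X} {x y z w : X}

lemma mem_interval : z ∈ interval G x y ↔ G.dist x z + G.dist z y = G.dist x y :=
  Iff.rfl

lemma interval_comm (x y : X) : interval G x y = interval G y x := by
  ext z
  simp only [mem_interval, SimpleGraph.dist_comm, add_comm]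

lemma left_mem_interval (x y : X) : x ∈ interval G x y := by
  simp [mem_interval]

lemma right_mem_interval (x y : X) : y ∈ interval G x y := by
  simp [mem_interval]

lemma SimpleGraph.Connected.interval_trans_left (hc : G.Connected) (hz : z ∈ interval G x y)
    (hw : w ∈ interval G x z) : w ∈ interval G x y ∧ z ∈ interval G w y := by
  have h₁ : G.dist w y ≤ G.dist w z + G.dist z y := hc.dist_triangle
  have h₂ : G.dist x y ≤ G.dist x w + G.dist w y := hc.dist_triangle
  simp only [mem_interval] at *
  omega

lemma SimpleGraph.Connected.interval_trans_right (hc : G.Connected) (hz : z ∈ interval G x y)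
    (hw : w ∈ interval G z y) : w ∈ interval G x y ∧ z ∈ interval G x w := by
  rw [interval_comm] at hz hw ⊢
  rw [interval_comm x w]
  exact hc.interval_trans_left hz hw

lemma SimpleGraph.Connected.exists_adj_mem_interval (hc : G.Connected) (hxy : x ≠ y) :
    ∃ x₁, G.Adj x x₁ ∧ x₁ ∈ interval G x y := by
  obtain ⟨p, hp⟩ := hc.exists_walk_length_eq_dist x y
  cases p with
  | nil => exact absurd rfl hxy
  | @cons _ x₁ _ hadj q =>
    refine ⟨x₁, hadj, ?_⟩
    have h₁ : G.dist x₁ y ≤ q.length := dist_le q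
    have h₂ : G.dist x y ≤ G.dist x x₁ + G.dist x₁ y := hc.dist_triangle
    rw [Walk.length_cons] at hp
    rw [mem_interval, dist_eq_one_iff_adj.2 hadj] at *
    omega

lemma SimpleGraph.Connected.exists_adj_mem_notMem_of_mem_interval (hc : G.Connected)
    {A : Set X} (hx : x ∈ A) (hz : z ∈ interval G x y) (hzA : z ∉ A) :
    ∃ a b, a ∈ A ∧ b ∉ A ∧ G.Adj a b ∧ b ∈ interval G a y := by
  induction hn : G.dist x z using Nat.strong_induction_on generalizing x with
  | _ n ih =>
  have hxz : x ≠ z := fun h => hzA (h ▸ hx)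
  obtain ⟨x₁, hadj, hx₁⟩ := hc.exists_adj_mem_interval hxz
  obtain ⟨hx₁y, hzx₁⟩ := hc.interval_trans_left hz hx₁
  by_cases hx₁A : x₁ ∈ A
  · rw [mem_interval, dist_eq_one_iff_adj.2 hadj] at hx₁
    exact ih _ (by omega) hx₁A hzx₁ rfl
  · exact ⟨x, x₁, hx, hx₁A, hadj, hx₁y⟩

end Interval

section Median

variable {G : SimpleGraph X} {x y z m : X}

lemma IsMedianGraph.medianOf_mem (hG : IsMedianGraph G) (x y z : X) :
    medianOf G x y z ∈ interval G x y ∧ medianOf G x y z ∈ interval G y z ∧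
      medianOf G x y z ∈ interval G z x := by
  rw [medianOf, dif_pos (hG.2 x y z)]
  exact (hG.2 x y z).choose_spec.1

lemma IsMedianGraph.eq_medianOf (hG : IsMedianGraph G) (hxy : m ∈ interval G x y)
    (hyz : m ∈ interval G y z) (hzx : m ∈ interval G z x) : m = medianOf G x y z := by
  rw [medianOf, dif_pos (hG.2 x y z)]
  exact (hG.2 x y z).choose_spec.2 m ⟨hxy, hyz, hzx⟩

lemma IsMedianGraph.medianOf_eq_of_mem_interval (hG : IsMedianGraph G)
    (hz : z ∈ interval G x y) : medianOf G x z y = z :=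
  (hG.eq_medianOf (right_mem_interval x z) (left_mem_interval z y)
    (by rwa [interval_comm])).symm

lemma IsMedianGraph.dist_eq_dist_add_one_of_adj (hG : IsMedianGraph G) (u : X) {v w : X}
    (hadj : G.Adj v w) : G.dist u v = G.dist u w + 1 ∨ G.dist u w = G.dist u v + 1 := by
  obtain ⟨m, h₁, h₂, h₃⟩ := (hG.2 u v w).exists
  have hvw := dist_eq_one_iff_adj.2 hadj
  rw [mem_interval] at h₁ h₂ h₃
  -- the median lies on the edge `vw`, hence is one of its ends
  obtain hm | hm : G.dist v m = 0 ∨ G.dist m w = 0 := by omega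
  all_goals
    rw [hG.1.dist_eq_zero_iff] at hm
    subst hm
    grind [SimpleGraph.dist_comm]

end Median

section Djokovic

variable {G : SimpleGraph X} {u v w x y z : X}

def djokovicSet (G : SimpleGraph X) (u v : X) : Set X :=
  {w | G.dist w u < G.dist w v}

lemma mem_djokovicSet : w ∈ djokovicSet G u v ↔ G.dist w u < G.dist w v :=
  Iff.rfl

lemma mem_djokovicSet_of_mem_interval (huv : G.Adj u v) (h : u ∈ interval G w v) :
    w ∈ djokovicSet G u v := by
  rw [mem_interval, dist_eq_one_iff_adj.2 huv] at h
  rw [mem_djokovicSet]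
  omega

lemma SimpleGraph.Connected.interval_subset_djokovicSet (hc : G.Connected)
    (hy : y ∈ djokovicSet G u v) : interval G y u ⊆ djokovicSet G u v := by
  intro m hm
  have : G.dist y v ≤ G.dist y m + G.dist m v := hc.dist_triangle
  rw [mem_interval] at hm
  rw [mem_djokovicSet] at *
  omega

lemma IsMedianGraph.dist_eq_add_one_of_mem_djokovicSet (hG : IsMedianGraph G) (huv : G.Adj u v)
    (hw : w ∈ djokovicSet G u v) : G.dist w v = G.dist w u + 1 := by
  have := hG.dist_eq_dist_add_one_of_adj w huv
  rw [mem_djokovicSet] at hw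
  omega

lemma IsMedianGraph.compl_djokovicSet (hG : IsMedianGraph G) (huv : G.Adj u v) :
    (djokovicSet G u v)ᶜ = djokovicSet G v u := by
  ext w
  have := hG.dist_eq_dist_add_one_of_adj w huv
  simp only [mem_compl_iff, mem_djokovicSet]
  omega

lemma IsMedianGraph.exists_adj_adj_of_dist_eq_two (hG : IsMedianGraph G)
    (hxy : G.dist x y = 2) (hw : G.dist x w = G.dist y w) :
    ∃ m, G.Adj x m ∧ G.Adj y m ∧ G.dist m w + 1 = G.dist x w := by
  obtain ⟨m, h₁, h₂, h₃⟩ := (hG.2 x y w).exists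
  rw [mem_interval] at h₁ h₂ h₃
  refine ⟨m, dist_eq_one_iff_adj.1 ?_, dist_eq_one_iff_adj.1 ?_, ?_⟩ <;>
    grind [SimpleGraph.dist_comm]

lemma IsMedianGraph.dist_eq_of_adj_of_mem_of_notMem_djokovicSet (hG : IsMedianGraph G)
    (huv : G.Adj u v) (hx : x ∈ djokovicSet G u v) (hz : z ∉ djokovicSet G u v)
    (hxz : G.Adj x z) : G.dist z u = G.dist x u + 1 ∧ G.dist z v = G.dist x u := by
  have hxv := hG.dist_eq_add_one_of_mem_djokovicSet huv hx
  have hzu := hG.dist_eq_add_one_of_mem_djokovicSet huv.symm (by rwa [← hG.compl_djokovicSet huv])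
  have := hG.dist_eq_dist_add_one_of_adj u hxz
  have := hG.dist_eq_dist_add_one_of_adj v hxz
  grind [SimpleGraph.dist_comm]

/- Induction on `d(z, y)`: the quadrangle condition moves the exit edge `xz` one step towards `y`,
until the next vertex `y₁` is back in `W_uv`; then `z` and the new vertex `S` are two medians of
`x`, `y₁`, `v`. -/
lemma IsMedianGraph.mem_djokovicSet_of_adj_of_mem_interval (hG : IsMedianGraph G)
    (huv : G.Adj u v) (hx : x ∈ djokovicSet G u v) (hxz : G.Adj x z) (hz : z ∈ interval G x y)
    (hy : y ∈ djokovicSet G u v) (hyu : y ∈ interval G z u) : z ∈ djokovicSet G u v := by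
  induction hn : G.dist z y using Nat.strong_induction_on generalizing x z with
  | _ n ih =>
  have hc := hG.1
  by_contra hzW
  obtain ⟨hzu, hzv⟩ := hG.dist_eq_of_adj_of_mem_of_notMem_djokovicSet huv hx hzW hxz
  obtain ⟨y₁, hzy₁, hy₁⟩ := hc.exists_adj_mem_interval (show z ≠ y from fun h => hzW (h ▸ hy))
  obtain ⟨hy₁u, hyu₁⟩ := hc.interval_trans_left hyu hy₁
  have hzxy₁ := (hc.interval_trans_right hz hy₁).2
  have hxz₁ := dist_eq_one_iff_adj.2 hxz
  have hzy₁₁ := dist_eq_one_iff_adj.2 hzy₁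
  rw [mem_interval] at hz hy₁ hy₁u hzxy₁
  obtain ⟨S, hxS, hy₁S, hSu⟩ :=
    hG.exists_adj_adj_of_dist_eq_two (w := u) (by omega : G.dist x y₁ = 2) (by omega)
  have hxS₁ := dist_eq_one_iff_adj.2 hxS
  have hy₁S₁ := dist_eq_one_iff_adj.2 hy₁S
  have hSW : S ∈ djokovicSet G u v :=
    hc.interval_subset_djokovicSet hx (by rw [mem_interval]; omega)
  have hy₁Sy : y₁ ∈ interval G S y := by
    have : G.dist x y ≤ G.dist x S + G.dist S y := hc.dist_triangle
    have : G.dist S y ≤ G.dist S y₁ + G.dist y₁ y := hc.dist_triangle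
    rw [mem_interval]
    grind [SimpleGraph.dist_comm]
  have hy₁W : y₁ ∈ djokovicSet G u v :=
    ih (G.dist y₁ y) (by omega) hSW hy₁S.symm hy₁Sy hyu₁ rfl
  have hxv := hG.dist_eq_add_one_of_mem_djokovicSet huv hx
  have hy₁v := hG.dist_eq_add_one_of_mem_djokovicSet huv hy₁W
  have hSv : G.dist S v = G.dist x u := by
    have : G.dist S v ≤ G.dist S u + G.dist u v := hc.dist_triangle
    have : G.dist x v ≤ G.dist x S + G.dist S v := hc.dist_triangle
    have := dist_eq_one_iff_adj.2 huv
    omega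
  have hzS : z = S := by
    rw [hG.eq_medianOf (x := x) (y := y₁) (z := v) (m := z),
      hG.eq_medianOf (x := x) (y := y₁) (z := v) (m := S)] <;>
    simp only [mem_interval] <;> grind [SimpleGraph.dist_comm]
  rw [hzS] at hzu
  omega

lemma IsMedianGraph.isConvexSet_djokovicSet (hG : IsMedianGraph G) (huv : G.Adj u v) :
    IsConvexSet G (djokovicSet G u v) := by
  intro x hx y hy z hz
  by_contra hzW
  obtain ⟨a, b, ha, hb, hab, hby⟩ := hG.1.exists_adj_mem_notMem_of_mem_interval hx hz hzW
  -- replace `y` by the median of `b`, `y`, `u`, which puts it between `b` and `u`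
  obtain ⟨hm₁, hm₂, hm₃⟩ := hG.medianOf_mem b y u
  exact hb (hG.mem_djokovicSet_of_adj_of_mem_interval huv ha hab
    (hG.1.interval_trans_right hby hm₁).2 (hG.1.interval_subset_djokovicSet hy hm₂)
    (by rwa [interval_comm]))

lemma IsMedianGraph.isHalfspace_djokovicSet (hG : IsMedianGraph G) (huv : G.Adj u v) :
    IsHalfspace G (djokovicSet G u v) := by
  refine ⟨hG.isConvexSet_djokovicSet huv, ?_⟩
  rw [hG.compl_djokovicSet huv]
  exact hG.isConvexSet_djokovicSet huv.symm

lemma IsMedianGraph.exists_isHalfspace_of_notMem_interval (hG : IsMedianGraph G)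
    {a b : X} (hw : w ∉ interval G a b) : ∃ H, IsHalfspace G H ∧ a ∈ H ∧ b ∈ H ∧ w ∉ H := by
  obtain ⟨m, hm₁, hm₂, hm₃⟩ := (hG.2 a b w).exists
  obtain ⟨c, hmc, hc⟩ := hG.1.exists_adj_mem_interval (show m ≠ w from fun h => hw (h ▸ hm₁))
  refine ⟨djokovicSet G m c, hG.isHalfspace_djokovicSet hmc, ?_, ?_, ?_⟩
  · rw [interval_comm] at hm₃
    exact mem_djokovicSet_of_mem_interval hmc (hG.1.interval_trans_right hm₃ hc).2
  · exact mem_djokovicSet_of_mem_interval hmc (hG.1.interval_trans_right hm₂ hc).2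
  · rw [interval_comm] at hc
    rw [← notMem_compl_iff, hG.compl_djokovicSet hmc, not_not]
    exact mem_djokovicSet_of_mem_interval hmc.symm hc

end Djokovic

section MedianHom

variable {Y : Type*} {G : SimpleGraph X} {G' : SimpleGraph Y} {f : X → Y}

lemma IsConvexSet.preimage {A : Set Y} (hA : IsConvexSet G' A)
    (hf : ∀ x y, MapsTo f (interval G x y) (interval G' (f x) (f y))) :
    IsConvexSet G (f ⁻¹' A) :=
  fun x hx y hy _ hz => hA _ hx _ hy (hf x y hz)

lemma IsHalfspace.preimage {H : Set Y} (hH : IsHalfspace G' H)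
    (hf : ∀ x y, MapsTo f (interval G x y) (interval G' (f x) (f y))) :
    IsHalfspace G (f ⁻¹' H) :=
  ⟨hH.1.preimage hf, hH.2.preimage hf⟩

lemma IsMedianGraph.mapsTo_interval_of_map_medianOf (hG : IsMedianGraph G)
    (hG' : IsMedianGraph G') (hf : ∀ x y z, f (medianOf G x y z) = medianOf G' (f x) (f y) (f z))
    (x y : X) : MapsTo f (interval G x y) (interval G' (f x) (f y)) := by
  intro z hz
  have hfz : f z = medianOf G' (f x) (f z) (f y) := by
    rw [← hf, hG.medianOf_eq_of_mem_interval hz]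
  rw [interval_comm, hfz]
  exact (hG'.medianOf_mem _ _ _).2.2

lemma IsMedianGraph.mapsTo_interval_of_isHalfspace_preimage (hG' : IsMedianGraph G')
    (hf : ∀ H, IsHalfspace G' H → IsHalfspace G (f ⁻¹' H)) (x y : X) :
    MapsTo f (interval G x y) (interval G' (f x) (f y)) := by
  intro z hz
  by_contra hfz
  obtain ⟨H, hH, hx, hy, hz'⟩ := hG'.exists_isHalfspace_of_notMem_interval hfz
  exact hz' ((hf H hH).1 x hx y hy hz)

lemma IsMedianGraph.map_medianOf (hG : IsMedianGraph G) (hG' : IsMedianGraph G')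
    (hf : ∀ x y, MapsTo f (interval G x y) (interval G' (f x) (f y))) (x y z : X) :
    f (medianOf G x y z) = medianOf G' (f x) (f y) (f z) :=
  have ⟨h₁, h₂, h₃⟩ := hG.medianOf_mem x y z
  hG'.eq_medianOf (hf x y h₁) (hf y z h₂) (hf z x h₃)

end MedianHom

theorem medianHom_iff_preimage_halfspace {Y : Type*} (G : SimpleGraph X) (G' : SimpleGraph Y)
    (hG : IsMedianGraph G) (hG' : IsMedianGraph G') (f : X → Y) :
    (∀ x y z : X, f (medianOf G x y z) = medianOf G' (f x) (f y) (f z)) ↔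
    (∀ H : Set Y, IsHalfspace G' H → IsHalfspace G (f ⁻¹' H)) :=
  ⟨fun hf _ hH => hH.preimage (hG.mapsTo_interval_of_map_medianOf hG' hf),
    fun hf => hG.map_medianOf hG' (hG'.mapsTo_interval_of_isHalfspace_preimage hf)⟩
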